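/- Let E be a topological graph and, for n, m ∈ ℕ, let U ⊆ Eⁿ and V ⊆ E^m (spaces of paths of length n and m). Then Z(U) ∩ Z(V) equals Z((U × r⁻¹_{m−n}(dₙ(U))) ∩ V) if n < m, Z(U ∩ (V × r⁻¹_{n−m}(d_m(V)))) if m < n, and Z(U ∩ V) if n = m. In particular, since each dₙ is open and each rₙ is continuous, the collection of sets Z(U) ∩ Z(K)ᶜ with U open and K a compact subset of the finite-path space (disjoint union topology) is closed under finite intersections. -/

import Mathlib

/-!
For `n ≤ m`, a path lies in `Z(U) ∩ Z(V)` exactly when its length-`m` prefix lies in `V` and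
that prefix truncated to length `n` lies in `U`. For a prefix in `Eᵐ` with `n < m`, the extra
condition that the `(n+1)`-st edge has range in `dₙ(U)` is the chain condition at the junction,
so it changes nothing. Closure of the basis under intersections then follows: the open parts
intersect to `Z` of an open set because truncation is continuous, and the compact parts combine
by de Morgan into a finite union of compact cylinders.
-/

open Set Topology

variable {E0 E1 : Type*} [TopologicalSpace E0] [TopologicalSpace E1]

/-- `E⁰_fin`: vertices with a neighbourhood whose `r`-preimage is compact. -/
def E0fin (r : E1 → E0) : Set E0 := {v | ∃ V ∈ nhds v, IsCompact (r ⁻¹' V)}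

/-- `E⁰_sce = E⁰ \ closure (r(E¹))`. -/
def E0sce (r : E1 → E0) : Set E0 := (closure (Set.range r))ᶜ

/-- `E⁰_rg = E⁰_fin \ closure (E⁰_sce)`, the regular vertices. -/
def E0rg (r : E1 → E0) : Set E0 := E0fin r \ closure (E0sce r)

/-- `E⁰_inf = E⁰ \ E⁰_fin`. -/
def E0inf (r : E1 → E0) : Set E0 := (E0fin r)ᶜ

/-- `E⁰_sg = E⁰_inf ∪ closure (E⁰_sce)`, the singular vertices. -/
def E0sg (r : E1 → E0) : Set E0 := E0inf r ∪ closure (E0sce r)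

/-- The chain condition for a tuple of `n` edges: `d μᵢ = r μ_{i+1}`. -/
def ChainN (d r : E1 → E0) (n : ℕ) (f : Fin n → E1) : Prop :=
  ∀ (i : ℕ) (h : i + 1 < n), d (f ⟨i, Nat.lt_of_succ_lt h⟩) = r (f ⟨i + 1, h⟩)

/-- The space `Eⁿ` of paths of length `n`, realized as a subset of
`E⁰ × (E¹)ⁿ` (the first coordinate being the range vertex). -/
def PathN (d r : E1 → E0) (n : ℕ) : Set (E0 × (Fin n → E1)) :=
  {p | ChainN d r n p.2 ∧ ∀ h : 0 < n, p.1 = r (p.2 ⟨0, h⟩)}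

/-- The space of all finite and infinite paths of a topological graph. -/
def TPath (d r : E1 → E0) : Type _ :=
  (Σ n : ℕ, {p : E0 × (Fin n → E1) // p ∈ PathN d r n}) ⊕
    {q : E0 × (ℕ → E1) // (∀ i : ℕ, d (q.2 i) = r (q.2 (i + 1))) ∧ q.1 = r (q.2 0)}

/-- Truncation of a length-`n` tuple to length `k ≤ n`. -/
def truncT (k n : ℕ) (h : k ≤ n) (p : E0 × (Fin n → E1)) : E0 × (Fin k → E1) :=
  (p.1, fun i => p.2 ⟨i.1, lt_of_lt_of_le i.2 h⟩)

/-- The cylinder set `Z(A)` of all paths whose length-`n` prefix lies in `A`. -/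
def ZT (d r : E1 → E0) (n : ℕ) (A : Set (E0 × (Fin n → E1))) : Set (TPath d r) :=
  Sum.elim (fun q => ∃ h : n ≤ q.1, truncT n q.1 h q.2.1 ∈ A)
    (fun q => ((q.1.1, fun i : Fin n => q.1.2 i.1) : E0 × (Fin n → E1)) ∈ A)

/-- The domain map `dₙ` on length-`n` tuples. -/
def dmapN (d : E1 → E0) (n : ℕ) (p : E0 × (Fin n → E1)) : E0 :=
  if h : 0 < n then d (p.2 ⟨n - 1, Nat.sub_lt h Nat.one_pos⟩) else p.1

/-- The length of a finite or infinite path. -/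
def lenT (d r : E1 → E0) (p : TPath d r) : ℕ∞ :=
  Sum.elim (fun q => (q.1 : ℕ∞)) (fun _ => (⊤ : ℕ∞)) p

section Cylinders

variable {d r : E1 → E0}

omit [TopologicalSpace E0] [TopologicalSpace E1] in
theorem truncT_self (n : ℕ) : truncT (E0 := E0) (E1 := E1) n n le_rfl = id := rfl

theorem continuous_truncT (k n : ℕ) (h : k ≤ n) :
    Continuous (truncT (E0 := E0) (E1 := E1) k n h) := by
  unfold truncT
  fun_prop

omit [TopologicalSpace E0] [TopologicalSpace E1] in
theorem ZT_inter_ZT_of_le {k₁ k₂ : ℕ} (h : k₁ ≤ k₂)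
    (A : Set (E0 × (Fin k₁ → E1))) (B : Set (E0 × (Fin k₂ → E1))) :
    ZT d r k₁ A ∩ ZT d r k₂ B = ZT d r k₂ (truncT k₁ k₂ h ⁻¹' A ∩ B) := by
  ext (q | q)
  · exact ⟨fun ⟨⟨_, hA⟩, hk₂, hB⟩ => ⟨hk₂, hA, hB⟩,
      fun ⟨hk₂, hA, hB⟩ => ⟨⟨h.trans hk₂, hA⟩, hk₂, hB⟩⟩
  · rfl

omit [TopologicalSpace E0] [TopologicalSpace E1] in
theorem ZT_inter_ZT (n : ℕ) (A B : Set (E0 × (Fin n → E1))) :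
    ZT d r n A ∩ ZT d r n B = ZT d r n (A ∩ B) := by
  rw [ZT_inter_ZT_of_le le_rfl, truncT_self, preimage_id]

theorem exists_isOpen_ZT_inter_ZT {k₁ k₂ : ℕ} {A : Set (E0 × (Fin k₁ → E1))}
    {B : Set (E0 × (Fin k₂ → E1))} (hA : IsOpen A) (hB : IsOpen B) :
    ∃ (k : ℕ) (C : Set (E0 × (Fin k → E1))), IsOpen C ∧
      ZT d r k₁ A ∩ ZT d r k₂ B = ZT d r k C := by
  rcases le_total k₁ k₂ with h | h
  · exact ⟨k₂, _, (hA.preimage (continuous_truncT _ _ h)).inter hB, ZT_inter_ZT_of_le h A B⟩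
  · exact ⟨k₁, _, (hB.preimage (continuous_truncT _ _ h)).inter hA,
      (inter_comm _ _).trans (ZT_inter_ZT_of_le h B A)⟩

omit [TopologicalSpace E0] [TopologicalSpace E1] in
theorem dmapN_truncT {n m : ℕ} (h : n < m) {p : E0 × (Fin m → E1)} (hp : p ∈ PathN d r m) :
    dmapN d n (truncT n m h.le p) = r (p.2 ⟨n, h⟩) := by
  obtain ⟨hchain, hrange⟩ := hp
  rcases Nat.eq_zero_or_pos n with rfl | hn
  · exact hrange h
  · simpa only [dmapN, dif_pos hn, truncT, Nat.sub_add_cancel hn] using hchain (n - 1) (by omega)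

omit [TopologicalSpace E0] [TopologicalSpace E1] in
theorem truncT_preimage_inter_eq {n m : ℕ} (h : n < m) (U : Set (E0 × (Fin n → E1)))
    {V : Set (E0 × (Fin m → E1))} (hV : V ⊆ PathN d r m) :
    truncT n m h.le ⁻¹' U ∩ V =
      {p | truncT n m h.le p ∈ U ∧ r (p.2 ⟨n, h⟩) ∈ dmapN d n '' U} ∩ V := by
  ext p
  simp only [mem_inter_iff, mem_preimage, mem_ofPred_eq, and_congr_left_iff]
  exact fun hpV => ⟨fun hpU => ⟨hpU, _, hpU, dmapN_truncT h (hV hpV)⟩, And.left⟩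

omit [TopologicalSpace E0] [TopologicalSpace E1] in
theorem exists_fin_iUnion_ZT_eq_union (P : (k : ℕ) → Set (E0 × (Fin k → E1)) → Prop)
    {N₁ N₂ : ℕ} {l₁ : Fin N₁ → ℕ} {l₂ : Fin N₂ → ℕ}
    {K₁ : (i : Fin N₁) → Set (E0 × (Fin (l₁ i) → E1))}
    {K₂ : (i : Fin N₂) → Set (E0 × (Fin (l₂ i) → E1))}
    (hK₁ : ∀ i, P (l₁ i) (K₁ i)) (hK₂ : ∀ i, P (l₂ i) (K₂ i)) :
    ∃ (N : ℕ) (l : Fin N → ℕ) (K : (i : Fin N) → Set (E0 × (Fin (l i) → E1))),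
      (∀ i, P (l i) (K i)) ∧
      ⋃ i, ZT d r (l i) (K i) = (⋃ i, ZT d r (l₁ i) (K₁ i)) ∪ ⋃ i, ZT d r (l₂ i) (K₂ i) := by
  let e := (finSumFinEquiv (m := N₁) (n := N₂)).symm
  let l : Fin N₁ ⊕ Fin N₂ → ℕ := Sum.elim l₁ l₂
  let K : (s : Fin N₁ ⊕ Fin N₂) → Set (E0 × (Fin (l s) → E1)) := fun s => Sum.rec K₁ K₂ s
  refine ⟨N₁ + N₂, fun i => l (e i), fun i => K (e i), fun i => ?_, ?_⟩
  · show P (l (e i)) (K (e i))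
    generalize e i = s
    rcases s with a | b
    exacts [hK₁ a, hK₂ b]
  · rw [e.surjective.iUnion_comp (fun s => ZT d r (l s) (K s)), iUnion_sum]
    rfl

end Cylinders

theorem stmt_17_general (d r : E1 → E0)
    (n m : ℕ) (U : Set (E0 × (Fin n → E1))) (V : Set (E0 × (Fin m → E1)))
    (hU : U ⊆ PathN d r n) (hV : V ⊆ PathN d r m) :
    (∀ h : n < m,
      ZT d r n U ∩ ZT d r m V =
        ZT d r m ({p | truncT n m h.le p ∈ U ∧ r (p.2 ⟨n, h⟩) ∈ dmapN d n '' U} ∩ V)) ∧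
    (∀ h : m < n,
      ZT d r n U ∩ ZT d r m V =
        ZT d r n (U ∩ {p | truncT m n h.le p ∈ V ∧ r (p.2 ⟨m, h⟩) ∈ dmapN d m '' V})) ∧
    (∀ W : Set (E0 × (Fin n → E1)), ZT d r n U ∩ ZT d r n W = ZT d r n (U ∩ W)) ∧
    (∀ S ∈ {S : Set (TPath d r) | ∃ (k : ℕ) (U' : Set (E0 × (Fin k → E1))), IsOpen U' ∧
          ∃ (N : ℕ) (l : Fin N → ℕ) (K : (i : Fin N) → Set (E0 × (Fin (l i) → E1))),
            (∀ i, IsCompact (K i) ∧ K i ⊆ PathN d r (l i)) ∧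
            S = ZT d r k U' ∩ (⋃ i, ZT d r (l i) (K i))ᶜ},
      ∀ T ∈ {S : Set (TPath d r) | ∃ (k : ℕ) (U' : Set (E0 × (Fin k → E1))), IsOpen U' ∧
          ∃ (N : ℕ) (l : Fin N → ℕ) (K : (i : Fin N) → Set (E0 × (Fin (l i) → E1))),
            (∀ i, IsCompact (K i) ∧ K i ⊆ PathN d r (l i)) ∧
            S = ZT d r k U' ∩ (⋃ i, ZT d r (l i) (K i))ᶜ},
      S ∩ T ∈ {S : Set (TPath d r) | ∃ (k : ℕ) (U' : Set (E0 × (Fin k → E1))), IsOpen U' ∧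
          ∃ (N : ℕ) (l : Fin N → ℕ) (K : (i : Fin N) → Set (E0 × (Fin (l i) → E1))),
            (∀ i, IsCompact (K i) ∧ K i ⊆ PathN d r (l i)) ∧
            S = ZT d r k U' ∩ (⋃ i, ZT d r (l i) (K i))ᶜ}) := by
  refine ⟨fun h => ?_, fun h => ?_, ZT_inter_ZT n U, ?_⟩
  · rw [ZT_inter_ZT_of_le h.le, truncT_preimage_inter_eq h U hV]
  · rw [inter_comm, ZT_inter_ZT_of_le h.le, truncT_preimage_inter_eq h V hU, inter_comm]
  · rintro _ ⟨k₁, U₁, hU₁, N₁, l₁, K₁, hK₁, rfl⟩ _ ⟨k₂, U₂, hU₂, N₂, l₂, K₂, hK₂, rfl⟩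
    obtain ⟨k, C, hC, hZ⟩ := exists_isOpen_ZT_inter_ZT (d := d) (r := r) hU₁ hU₂
    obtain ⟨N, l, K, hK, hKU⟩ :=
      exists_fin_iUnion_ZT_eq_union (fun k K => IsCompact K ∧ K ⊆ PathN d r k) hK₁ hK₂
    refine ⟨k, C, hC, N, l, K, hK, ?_⟩
    rw [hKU, ← hZ, inter_inter_inter_comm, compl_union]

/-- the intersection formulas for cylinder sets over a topological
graph, and closure under finite intersections of the collection of basic sets
`Z(U) ∩ Z(K)ᶜ` with `U` open and `K` a compact subset of the finite-path space
(a finite union of compacts `K i ⊆ E^(l i)`). -/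
theorem stmt_17 (d r : E1 → E0) (hr : Continuous r) (hd : IsLocalHomeomorph d)
    (n m : ℕ) (U : Set (E0 × (Fin n → E1))) (V : Set (E0 × (Fin m → E1)))
    (hU : U ⊆ PathN d r n) (hV : V ⊆ PathN d r m) :
    (∀ h : n < m,
      ZT d r n U ∩ ZT d r m V =
        ZT d r m ({p | truncT n m h.le p ∈ U ∧ r (p.2 ⟨n, h⟩) ∈ dmapN d n '' U} ∩ V)) ∧
    (∀ h : m < n,
      ZT d r n U ∩ ZT d r m V =
        ZT d r n (U ∩ {p | truncT m n h.le p ∈ V ∧ r (p.2 ⟨m, h⟩) ∈ dmapN d m '' V})) ∧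
    (∀ W : Set (E0 × (Fin n → E1)), ZT d r n U ∩ ZT d r n W = ZT d r n (U ∩ W)) ∧
    (∀ S ∈ {S : Set (TPath d r) | ∃ (k : ℕ) (U' : Set (E0 × (Fin k → E1))), IsOpen U' ∧
          ∃ (N : ℕ) (l : Fin N → ℕ) (K : (i : Fin N) → Set (E0 × (Fin (l i) → E1))),
            (∀ i, IsCompact (K i) ∧ K i ⊆ PathN d r (l i)) ∧
            S = ZT d r k U' ∩ (⋃ i, ZT d r (l i) (K i))ᶜ},
      ∀ T ∈ {S : Set (TPath d r) | ∃ (k : ℕ) (U' : Set (E0 × (Fin k → E1))), IsOpen U' ∧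
          ∃ (N : ℕ) (l : Fin N → ℕ) (K : (i : Fin N) → Set (E0 × (Fin (l i) → E1))),
            (∀ i, IsCompact (K i) ∧ K i ⊆ PathN d r (l i)) ∧
            S = ZT d r k U' ∩ (⋃ i, ZT d r (l i) (K i))ᶜ},
      S ∩ T ∈ {S : Set (TPath d r) | ∃ (k : ℕ) (U' : Set (E0 × (Fin k → E1))), IsOpen U' ∧
          ∃ (N : ℕ) (l : Fin N → ℕ) (K : (i : Fin N) → Set (E0 × (Fin (l i) → E1))),
            (∀ i, IsCompact (K i) ∧ K i ⊆ PathN d r (l i)) ∧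
            S = ZT d r k U' ∩ (⋃ i, ZT d r (l i) (K i))ᶜ}) :=
  stmt_17_general d r n m U V hU hV
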